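/- arXiv:math/0111312 — 2 statements merged into one kernel-verified Lean document; each statement's English description precedes it below -/
import Mathlib

section
/- For any real σ and any α > -σ, there is a constant K(α,σ) such that for all complex z with Re(z) ≥ α, one has |Γ(z+σ)/Γ(z)| ≤ K(α,σ)·|z+σ|^σ. -/
open Real

lemma log_sq_interp (b T σ : ℝ) (hb : 0 < b) (hT : 0 ≤ T) (hTb : T ≤ b)
    (h0 : 0 ≤ σ) (h1 : σ ≤ 1) :
    (1 - σ) * Real.log (b ^ 2 + T ^ 2) + σ * Real.log ((b + 1) ^ 2 + T ^ 2)
      ≤ Real.log ((b + σ) ^ 2 + T ^ 2) := by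
  set f : ℝ → ℝ := fun u => Real.log ((b + u) ^ 2 + T ^ 2) with hf
  have gpos : ∀ u : ℝ, 0 ≤ u → 0 < (b + u) ^ 2 + T ^ 2 := by
    intro u hu; nlinarith
  have hder : ∀ u : ℝ, 0 ≤ u →
      HasDerivAt f (2 * (b + u) / ((b + u) ^ 2 + T ^ 2)) u := by
    intro u hu
    have hq : HasDerivAt (fun u : ℝ => (b + u) ^ 2 + T ^ 2) (2 * (b + u)) u := by
      have h1 : HasDerivAt (fun u : ℝ => b + u) 1 u := (hasDerivAt_id u).const_add b
      have h2 := (h1.pow 2).add_const (T ^ 2)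
      exact h2.congr_deriv (by norm_num)
    have hlog := (Real.hasDerivAt_log (ne_of_gt (gpos u hu))).comp u hq
    exact hlog.congr_deriv (by ring)
  have hconc : ConcaveOn ℝ (Set.Ici (0 : ℝ)) f := by
    apply AntitoneOn.concaveOn_of_deriv (convex_Ici 0)
    · intro u hu
      exact (hder u hu).continuousAt.continuousWithinAt
    · intro u hu
      rw [interior_Ici] at hu
      exact (hder u (le_of_lt hu)).differentiableAt.differentiableWithinAt
    · rw [interior_Ici]
      intro u hu v hv huv
      rw [(hder u hu.le).deriv, (hder v hv.le).deriv]
      rw [div_le_div_iff₀ (gpos v hv.le) (gpos u hu.le)]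
      have huv' : 0 ≤ (v - u) * ((b + u) * (b + v) - T ^ 2) := by
        have h1 : T ^ 2 ≤ (b + u) * (b + v) := by nlinarith [hu.out, hv.out]
        nlinarith
      nlinarith
  have key := hconc.2 (Set.mem_Ici.mpr (le_refl 0)) (Set.mem_Ici.mpr zero_le_one)
    (by linarith : (0:ℝ) ≤ 1 - σ) h0 (by ring)
  simp only [smul_eq_mul, mul_zero, mul_one, zero_add] at key
  simpa [hf] using key
open Finset

lemma prod_bound (σ T a : ℝ) (ha : 1 ≤ a) (hT : 0 ≤ T) (hσ0 : 0 ≤ σ) (hσ1 : σ ≤ 1) (n : ℕ) :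
    ∏ j ∈ Finset.range (n + 1), (((a + j) ^ 2 + T ^ 2) / ((a + σ + j) ^ 2 + T ^ 2))
      ≤ 3 * ((a ^ 2 + T ^ 2) / ((a + (n + 1)) ^ 2 + T ^ 2)) ^ σ := by
  have ha0 : (0:ℝ) < a := lt_of_lt_of_le one_pos ha
  have gpos : ∀ u : ℝ, 0 ≤ u → 0 < (a + u) ^ 2 + T ^ 2 := fun u hu => by nlinarith
  set F : ℕ → ℝ := fun k => Real.log ((a + k) ^ 2 + T ^ 2) with hF
  set J : ℕ := ⌈T - a⌉₊ with hJ
  -- per-term bound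
  have term_bound : ∀ j : ℕ,
      Real.log (((a + j) ^ 2 + T ^ 2) / ((a + σ + j) ^ 2 + T ^ 2))
        ≤ σ * (F j - F (j + 1)) + (if j < J then F (j + 1) - F j else 0) := by
    intro j
    have hj0 : (0:ℝ) ≤ (j:ℝ) := Nat.cast_nonneg j
    have p1 : 0 < (a + j) ^ 2 + T ^ 2 := gpos j hj0
    have p2 : 0 < (a + σ + j) ^ 2 + T ^ 2 := by nlinarith
    have p3 : 0 < (a + (j+1:ℕ)) ^ 2 + T ^ 2 := gpos (j+1:ℕ) (by positivity)
    have hlogdiv : Real.log (((a + j) ^ 2 + T ^ 2) / ((a + σ + j) ^ 2 + T ^ 2))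
        = F j - Real.log ((a + σ + j) ^ 2 + T ^ 2) := Real.log_div (ne_of_gt p1) (ne_of_gt p2)
    by_cases hcase : j < J
    · -- monotonicity suffices
      simp only [hcase, if_true]
      rw [hlogdiv]
      have m1 : F j ≤ Real.log ((a + σ + j) ^ 2 + T ^ 2) := by
        apply Real.log_le_log p1
        nlinarith
      have m2 : F j ≤ F (j + 1) := by
        apply Real.log_le_log p1
        push_cast
        nlinarith
      nlinarith
    · simp only [hcase, if_false, add_zero]
      rw [hlogdiv]
      -- concavity case: a + j ≥ T
      have hTb : T ≤ a + j := by
        have : ¬ ((j:ℝ) < T - a) := fun h => hcase (Nat.lt_ceil.mpr h)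
        push_neg at this
        linarith
      have key := log_sq_interp (a + j) T σ (by linarith) hT hTb hσ0 hσ1
      have e1 : (a + j + σ) ^ 2 = (a + σ + j) ^ 2 := by ring
      have e2 : F (j+1) = Real.log ((a + j + 1) ^ 2 + T ^ 2) := by
        simp only [hF]; push_cast; ring_nf
      rw [e1] at key
      rw [e2]
      simp only [hF] at *
      nlinarith [key]
  -- sum the if-part
  have dsum : ∀ m : ℕ, (∑ j ∈ range m, (if j < J then F (j + 1) - F j else 0))
      = F (min m J) - F 0 := by
    intro m
    induction m with
    | zero => simp
    | succ m ih =>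
      rw [Finset.sum_range_succ, ih]
      by_cases hm : m < J
      · simp only [hm, if_true]
        have : min (m+1) J = m + 1 := by omega
        have h2 : min m J = m := by omega
        rw [this, h2]; ring
      · simp only [hm, if_false]
        have : min (m+1) J = J := by omega
        have h2 : min m J = J := by omega
        rw [this, h2]; ring
  have dsum_le : F (min (n+1) J) - F 0 ≤ Real.log 3 := by
    rcases Nat.eq_zero_or_pos (min (n+1) J) with h | h
    · rw [h]; simp; positivity
    · obtain ⟨k, hk⟩ : ∃ k, min (n+1) J = k + 1 := ⟨min (n+1) J - 1, by omega⟩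
      rw [hk]
      have hkJ : k < J := by omega
      have hkT : (k:ℝ) < T - a := Nat.lt_ceil.mp hkJ
      have hb : (a + (k+1:ℕ)) ^ 2 + T ^ 2 ≤ 3 * ((a + (0:ℕ)) ^ 2 + T ^ 2) := by
        push_cast
        nlinarith
      have := Real.log_le_log (gpos _ (by positivity)) hb
      rw [Real.log_mul (by norm_num) (ne_of_gt (gpos _ (by positivity)))] at this
      simp only [hF]
      push_cast at this ⊢
      linarith
  -- combine
  have sum_le : ∑ j ∈ range (n+1),
      Real.log (((a + j) ^ 2 + T ^ 2) / ((a + σ + j) ^ 2 + T ^ 2))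
      ≤ σ * (F 0 - F (n+1)) + Real.log 3 := by
    calc ∑ j ∈ range (n+1), Real.log (((a + j) ^ 2 + T ^ 2) / ((a + σ + j) ^ 2 + T ^ 2))
        ≤ ∑ j ∈ range (n+1), (σ * (F j - F (j + 1)) + (if j < J then F (j + 1) - F j else 0)) :=
          Finset.sum_le_sum (fun j _ => term_bound j)
      _ = σ * (F 0 - F (n+1)) + (F (min (n+1) J) - F 0) := by
          rw [Finset.sum_add_distrib, ← Finset.mul_sum, Finset.sum_range_sub' F, dsum]
      _ ≤ σ * (F 0 - F (n+1)) + Real.log 3 := by linarith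
  -- exponentiate
  have ppos : ∀ j ∈ range (n+1), (0:ℝ) < ((a + j) ^ 2 + T ^ 2) / ((a + σ + j) ^ 2 + T ^ 2) := by
    intro j _
    have hj0 : (0:ℝ) ≤ (j:ℝ) := Nat.cast_nonneg j
    have p1 : 0 < (a + j) ^ 2 + T ^ 2 := gpos j hj0
    have p2 : 0 < (a + σ + j) ^ 2 + T ^ 2 := by nlinarith
    positivity
  have prodpos : (0:ℝ) < ∏ j ∈ range (n+1), (((a + j) ^ 2 + T ^ 2) / ((a + σ + j) ^ 2 + T ^ 2)) :=
    Finset.prod_pos ppos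
  have Xpos : (0:ℝ) < (a ^ 2 + T ^ 2) / ((a + (n + 1)) ^ 2 + T ^ 2) := by
    have := gpos (n+1:ℝ) (by positivity)
    have h0 := gpos 0 le_rfl
    simp only [add_zero] at h0
    positivity
  have RHSpos : (0:ℝ) < 3 * ((a ^ 2 + T ^ 2) / ((a + (n + 1)) ^ 2 + T ^ 2)) ^ σ := by positivity
  rw [← Real.log_le_log_iff prodpos RHSpos]
  rw [Real.log_prod (fun j hj => ne_of_gt (ppos j hj))]
  rw [Real.log_mul (by norm_num) (ne_of_gt (Real.rpow_pos_of_pos Xpos σ)), Real.log_rpow Xpos]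
  have hX : Real.log ((a ^ 2 + T ^ 2) / ((a + (n + 1)) ^ 2 + T ^ 2)) = F 0 - F (n+1) := by
    rw [Real.log_div (by positivity) (ne_of_gt (gpos (n+1:ℝ) (by positivity)))]
    simp only [hF]
    push_cast
    ring_nf
  rw [hX]
  linarith
set_option maxHeartbeats 1000000 in
open Finset Nat in
lemma core_bound (σ : ℝ) (hσ0 : 0 ≤ σ) (hσ1 : σ ≤ 1) (z : ℂ) (hz : 1 ≤ z.re) :
    ‖Complex.Gamma (z + σ) / Complex.Gamma z‖ ≤ 4 * ‖z + (σ : ℂ)‖ ^ σ := by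
  set a := z.re with ha
  set T := |z.im| with hT
  have ha1 : (1:ℝ) ≤ a := hz
  have hT0 : (0:ℝ) ≤ T := abs_nonneg _
  clear_value a T
  have hΓz : Complex.Gamma z ≠ 0 := Complex.Gamma_ne_zero_of_re_pos (by linarith)
  have hne : ∀ w : ℂ, 0 < w.re → w ≠ 0 := by
    intro w hw h; rw [h] at hw; simp at hw
  -- norm of z + σ is at least 1
  have hzσ1 : (1:ℝ) ≤ ‖z + (σ:ℂ)‖ := by
    have : (z + (σ:ℂ)).re = a + σ := by simp [Complex.add_re, Complex.ofReal_re, ha]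
    calc (1:ℝ) ≤ a + σ := by linarith
      _ = (z + (σ:ℂ)).re := this.symm
      _ ≤ ‖z + (σ:ℂ)‖ := Complex.re_le_norm _
      _ = ‖z + (σ:ℂ)‖ := rfl
  have tends : Filter.Tendsto
      (fun n => ‖Complex.GammaSeq (z + σ) n / Complex.GammaSeq z n‖)
      Filter.atTop (nhds ‖Complex.Gamma (z + σ) / Complex.Gamma z‖) :=
    (((Complex.GammaSeq_tendsto_Gamma (z + σ)).div
      (Complex.GammaSeq_tendsto_Gamma z) hΓz)).norm
  refine le_of_tendsto tends ?_
  filter_upwards [Filter.eventually_ge_atTop 1] with n hn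
  -- now n ≥ 1
  have npos : (0:ℝ) < (n:ℝ) := by exact_mod_cast Nat.lt_of_lt_of_le Nat.zero_lt_one hn
  set P1 : ℝ := ∏ j ∈ range (n+1), ‖z + (j:ℂ)‖ with hP1
  set P2 : ℝ := ∏ j ∈ range (n+1), ‖z + (σ:ℂ) + (j:ℂ)‖ with hP2
  have hznz : ∀ j : ℕ, z + (j:ℂ) ≠ 0 := by
    intro j; apply hne
    simp only [Complex.add_re, Complex.natCast_re]
    have : (0:ℝ) ≤ (j:ℝ) := Nat.cast_nonneg j
    linarith
  have hzσnz : ∀ j : ℕ, z + (σ:ℂ) + (j:ℂ) ≠ 0 := by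
    intro j; apply hne
    simp only [Complex.add_re, Complex.natCast_re, Complex.ofReal_re]
    have : (0:ℝ) ≤ (j:ℝ) := Nat.cast_nonneg j
    linarith
  have P1pos : 0 < P1 := Finset.prod_pos fun j _ => norm_pos_iff.mpr (hznz j)
  have P2pos : 0 < P2 := Finset.prod_pos fun j _ => norm_pos_iff.mpr (hzσnz j)
  clear_value P1 P2
  have nrm : ∀ s : ℂ, ‖Complex.GammaSeq s n‖
      = (n:ℝ) ^ s.re * (n ! : ℝ) / ∏ j ∈ range (n+1), ‖s + (j:ℂ)‖ := by
    intro s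
    rw [Complex.GammaSeq, norm_div, norm_mul, norm_prod]
    congr 2
    · rw [show ((n:ℂ)) = ((n:ℝ):ℂ) by push_cast; rfl,
        Complex.norm_cpow_eq_rpow_re_of_pos npos]
    · simp
  have hQ : ‖Complex.GammaSeq (z + σ) n / Complex.GammaSeq z n‖
      = (n:ℝ) ^ σ * (P1 / P2) := by
    rw [norm_div, nrm, nrm]
    have hre : (z + (σ:ℂ)).re = a + σ := by simp [Complex.add_re, Complex.ofReal_re, ha]
    rw [hre, ← ha, ← hP1, ← hP2, Real.rpow_add npos]
    have hfac : (0:ℝ) < (n ! : ℝ) := by positivity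
    have hna : (0:ℝ) < (n:ℝ) ^ a := Real.rpow_pos_of_pos npos a
    have harith : ∀ A B C p q : ℝ, 0 < A → 0 < C → 0 < p → 0 < q →
        (A * B * C / q) / (A * C / p) = B * (p / q) := by
      intros A B C p q hA hC hp hq
      field_simp
    exact harith _ _ _ _ _ hna hfac P1pos P2pos
  rw [hQ]
  -- squares of products
  have sq1 : P1 ^ 2 = ∏ j ∈ range (n+1), ((a + j) ^ 2 + T ^ 2) := by
    rw [hP1, ← Finset.prod_pow]
    refine Finset.prod_congr rfl fun j _ => ?_
    rw [Complex.sq_norm, Complex.normSq_apply]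
    simp only [Complex.add_re, Complex.add_im, Complex.natCast_re, Complex.natCast_im]
    rw [ha, hT, sq_abs]
    ring
  have sq2 : P2 ^ 2 = ∏ j ∈ range (n+1), ((a + σ + j) ^ 2 + T ^ 2) := by
    rw [hP2, ← Finset.prod_pow]
    refine Finset.prod_congr rfl fun j _ => ?_
    rw [Complex.sq_norm, Complex.normSq_apply]
    simp only [Complex.add_re, Complex.add_im, Complex.natCast_re, Complex.natCast_im,
      Complex.ofReal_re, Complex.ofReal_im]
    rw [ha, hT, sq_abs]
    ring
  have hsplit : (P1 / P2) ^ 2 = ∏ j ∈ range (n+1), (((a + j) ^ 2 + T ^ 2) / ((a + σ + j) ^ 2 + T ^ 2)) := by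
    rw [div_pow, sq1, sq2, ← Finset.prod_div_distrib]
  have key := prod_bound σ T a ha1 hT0 hσ0 hσ1 n
  rw [← hsplit] at key
  -- replace denominator by n^2
  have gn : (0:ℝ) < (a + (n + 1)) ^ 2 + T ^ 2 := by nlinarith
  have hXle : (a ^ 2 + T ^ 2) / ((a + (n + 1)) ^ 2 + T ^ 2) ≤ (a ^ 2 + T ^ 2) / (n:ℝ) ^ 2 := by
    apply div_le_div_of_nonneg_left (by positivity) (by positivity)
    nlinarith
  have key2 : (P1 / P2) ^ 2 ≤ 3 * ((a ^ 2 + T ^ 2) / (n:ℝ) ^ 2) ^ σ := by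
    calc (P1 / P2) ^ 2 ≤ 3 * ((a ^ 2 + T ^ 2) / ((a + (n + 1)) ^ 2 + T ^ 2)) ^ σ := key
      _ ≤ 3 * ((a ^ 2 + T ^ 2) / (n:ℝ) ^ 2) ^ σ := by
          have := Real.rpow_le_rpow (le_of_lt (by positivity)) hXle hσ0
          linarith
  -- rewrite RHS of key2
  have hzn : (0:ℝ) < a ^ 2 + T ^ 2 := by nlinarith
  have habs : a ^ 2 + T ^ 2 = ‖z‖ ^ 2 := by
    rw [Complex.sq_norm, Complex.normSq_apply, hT, sq_abs, ha]; ring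
  have hnormz : (0:ℝ) < ‖z‖ := by
    apply norm_pos_iff.mpr; apply hne; linarith
  have key3 : ((n:ℝ) ^ σ * (P1 / P2)) ^ 2 ≤ (2 * ‖z‖ ^ σ) ^ 2 := by
    have e1 : ((a ^ 2 + T ^ 2) / (n:ℝ) ^ 2) ^ σ
        = (a ^ 2 + T ^ 2) ^ σ / ((n:ℝ) ^ 2) ^ σ :=
      Real.div_rpow (le_of_lt hzn) (by positivity) σ
    have e2 : ((n:ℝ) ^ 2 : ℝ) ^ σ = ((n:ℝ) ^ σ) ^ 2 := by
      rw [← Real.rpow_natCast ((n:ℝ) ^ σ) 2, ← Real.rpow_natCast (n:ℝ) 2,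
        ← Real.rpow_mul (le_of_lt npos), ← Real.rpow_mul (le_of_lt npos), mul_comm]
    have e3 : (a ^ 2 + T ^ 2) ^ σ = (‖z‖ ^ σ) ^ 2 := by
      rw [habs, ← Real.rpow_natCast (‖z‖ ^ σ) 2, ← Real.rpow_natCast ‖z‖ 2,
        ← Real.rpow_mul (le_of_lt hnormz), ← Real.rpow_mul (le_of_lt hnormz), mul_comm]
    have npowpos : (0:ℝ) < ((n:ℝ) ^ σ) ^ 2 := by positivity
    have : ((n:ℝ) ^ σ * (P1 / P2)) ^ 2 = ((n:ℝ) ^ σ) ^ 2 * (P1 / P2) ^ 2 := by ring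
    rw [this]
    calc ((n:ℝ) ^ σ) ^ 2 * (P1 / P2) ^ 2
        ≤ ((n:ℝ) ^ σ) ^ 2 * (3 * ((a ^ 2 + T ^ 2) / (n:ℝ) ^ 2) ^ σ) := by
          apply mul_le_mul_of_nonneg_left key2 (le_of_lt npowpos)
      _ = 3 * (‖z‖ ^ σ) ^ 2 := by
          rw [e1, e2, e3, mul_comm, mul_assoc, div_mul_cancel₀ _ (ne_of_gt npowpos)]
      _ ≤ (2 * ‖z‖ ^ σ) ^ 2 := by nlinarith [Real.rpow_nonneg (norm_nonneg z) σ]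
  have hQle : (n:ℝ) ^ σ * (P1 / P2) ≤ 2 * ‖z‖ ^ σ := by
    have h1 : (0:ℝ) ≤ (n:ℝ) ^ σ * (P1 / P2) := by positivity
    have h2 : (0:ℝ) ≤ 2 * ‖z‖ ^ σ := by positivity
    nlinarith [key3]
  -- finally ‖z‖ ≤ 2 ‖z+σ‖
  have hz2 : ‖z‖ ≤ 2 * ‖z + (σ:ℂ)‖ := by
    have : ‖z‖ ≤ ‖z + (σ:ℂ)‖ + ‖(σ:ℂ)‖ := by
      calc ‖z‖ = ‖(z + (σ:ℂ)) + (-(σ:ℂ))‖ := by congr 1; ring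
        _ ≤ ‖z + (σ:ℂ)‖ + ‖(-(σ:ℂ))‖ := norm_add_le _ _
        _ = ‖z + (σ:ℂ)‖ + ‖(σ:ℂ)‖ := by rw [norm_neg]
    have hσn : ‖(σ:ℂ)‖ = σ := by
      rw [Complex.norm_real, Real.norm_eq_abs, abs_of_nonneg hσ0]
    rw [hσn] at this
    nlinarith
  have final : ‖z‖ ^ σ ≤ 2 * ‖z + (σ:ℂ)‖ ^ σ := by
    calc ‖z‖ ^ σ ≤ (2 * ‖z + (σ:ℂ)‖) ^ σ :=
          Real.rpow_le_rpow (norm_nonneg z) hz2 hσ0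
      _ = 2 ^ σ * ‖z + (σ:ℂ)‖ ^ σ :=
          Real.mul_rpow (by norm_num) (norm_nonneg _)
      _ ≤ 2 * ‖z + (σ:ℂ)‖ ^ σ := by
          have h2σ : (2:ℝ) ^ σ ≤ 2 := by
            calc (2:ℝ) ^ σ ≤ (2:ℝ) ^ (1:ℝ) :=
              Real.rpow_le_rpow_of_exponent_le one_le_two hσ1
            _ = 2 := Real.rpow_one 2
          have := Real.rpow_nonneg (norm_nonneg (z + (σ:ℂ))) σ
          nlinarith
  calc (n:ℝ) ^ σ * (P1 / P2) ≤ 2 * ‖z‖ ^ σ := hQle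
    _ ≤ 2 * (2 * ‖z + (σ:ℂ)‖ ^ σ) := by linarith
    _ = 4 * ‖z + (σ:ℂ)‖ ^ σ := by ring
lemma norm_le_norm_add_one (w : ℂ) (hw : 0 ≤ w.re) : ‖w‖ ≤ ‖w + 1‖ := by
  have h : ‖w‖ ^ 2 ≤ ‖w + 1‖ ^ 2 := by
    rw [Complex.sq_norm, Complex.sq_norm,
      Complex.normSq_apply, Complex.normSq_apply]
    simp only [Complex.add_re, Complex.add_im, Complex.one_re, Complex.one_im]
    nlinarith
  nlinarith [h, norm_nonneg w, norm_nonneg (w + 1)]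

lemma ratio_rpow {x y : ℝ} (σ C : ℝ) (hx : 0 < x) (hxy : x ≤ y) (hyC : y ≤ C * x)
    (hC : 1 ≤ C) : y ^ σ ≤ C ^ |σ| * x ^ σ := by
  rcases le_or_gt 0 σ with hσ | hσ
  · calc y ^ σ ≤ (C * x) ^ σ := Real.rpow_le_rpow (le_of_lt (lt_of_lt_of_le hx hxy)) hyC hσ
      _ = C ^ σ * x ^ σ := Real.mul_rpow (by linarith) (le_of_lt hx)
      _ ≤ C ^ |σ| * x ^ σ := by
          apply mul_le_mul_of_nonneg_right
            (Real.rpow_le_rpow_of_exponent_le hC (le_abs_self σ))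
            (le_of_lt (Real.rpow_pos_of_pos hx σ))
  · calc y ^ σ ≤ x ^ σ := Real.rpow_le_rpow_of_nonpos hx hxy (le_of_lt hσ)
      _ ≤ C ^ |σ| * x ^ σ := by
          have h1 : (1:ℝ) ≤ C ^ |σ| := Real.one_le_rpow hC (abs_nonneg σ)
          nlinarith [Real.rpow_pos_of_pos hx σ]

lemma step_up (σ β K : ℝ) (hβ : 1 ≤ β) (hσ : 0 ≤ σ) (hK : 0 < K)
    (h : ∀ z : ℂ, β ≤ z.re → ‖Complex.Gamma (z + σ) / Complex.Gamma z‖ ≤ K * ‖z + (σ:ℂ)‖ ^ σ) :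
    ∀ z : ℂ, β ≤ z.re →
      ‖Complex.Gamma (z + ((σ+1:ℝ):ℂ)) / Complex.Gamma z‖ ≤ K * ‖z + ((σ+1:ℝ):ℂ)‖ ^ (σ+1) := by
  intro z hz
  set w : ℂ := z + (σ:ℂ) with hw
  have hwre : 1 ≤ w.re := by
    simp only [hw, Complex.add_re, Complex.ofReal_re]
    linarith
  have hwne : w ≠ 0 := by
    intro h0; rw [h0] at hwre; simp at hwre; linarith
  have hwnorm : 1 ≤ ‖w‖ := by
    calc (1:ℝ) ≤ w.re := hwre
      _ ≤ ‖w‖ := Complex.re_le_norm w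
      _ = ‖w‖ := rfl
  have e0 : z + ((σ+1:ℝ):ℂ) = w + 1 := by rw [hw]; push_cast; ring
  have e1 : Complex.Gamma (z + ((σ+1:ℝ):ℂ)) = w * Complex.Gamma w := by
    rw [e0]; exact Complex.Gamma_add_one w hwne
  rw [e1, e0]
  have : w * Complex.Gamma w / Complex.Gamma z = w * (Complex.Gamma w / Complex.Gamma z) := by
    ring
  rw [this, norm_mul]
  have hb := h z hz
  rw [← hw] at hb
  calc ‖w‖ * ‖Complex.Gamma w / Complex.Gamma z‖
      ≤ ‖w‖ * (K * ‖w‖ ^ σ) := by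
        apply mul_le_mul_of_nonneg_left hb (norm_nonneg w)
    _ = K * ‖w‖ ^ (σ + 1) := by
        rw [Real.rpow_add (lt_of_lt_of_le one_pos hwnorm), Real.rpow_one]; ring
    _ ≤ K * ‖w + 1‖ ^ (σ + 1) := by
        apply mul_le_mul_of_nonneg_left _ (le_of_lt hK)
        exact Real.rpow_le_rpow (norm_nonneg w)
          (norm_le_norm_add_one w (by linarith)) (by linarith)

lemma step_down (σ β K : ℝ) (hK : 0 < K) (hβσ : 1 ≤ β + (σ - 1))
    (h : ∀ z : ℂ, β ≤ z.re → ‖Complex.Gamma (z + σ) / Complex.Gamma z‖ ≤ K * ‖z + (σ:ℂ)‖ ^ σ) :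
    ∃ K', 0 < K' ∧ ∀ z : ℂ, β ≤ z.re →
      ‖Complex.Gamma (z + ((σ-1:ℝ):ℂ)) / Complex.Gamma z‖ ≤ K' * ‖z + ((σ-1:ℝ):ℂ)‖ ^ (σ-1) := by
  refine ⟨K * 2 ^ |σ|, by positivity, ?_⟩
  intro z hz
  set w : ℂ := z + ((σ-1:ℝ):ℂ) with hw
  have hwre : 1 ≤ w.re := by
    simp only [hw, Complex.add_re, Complex.ofReal_re]
    linarith
  have hwne : w ≠ 0 := by
    intro h0; rw [h0] at hwre; simp at hwre; linarith
  have hwnorm : 1 ≤ ‖w‖ := by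
    calc (1:ℝ) ≤ w.re := hwre
      _ ≤ ‖w‖ := Complex.re_le_norm w
      _ = ‖w‖ := rfl
  have hwpos : (0:ℝ) < ‖w‖ := lt_of_lt_of_le one_pos hwnorm
  have e0 : z + (σ:ℂ) = w + 1 := by rw [hw]; push_cast; ring
  have e1 : Complex.Gamma (z + (σ:ℂ)) = w * Complex.Gamma w := by
    rw [e0]; exact Complex.Gamma_add_one w hwne
  have e2 : Complex.Gamma w / Complex.Gamma z
      = (Complex.Gamma (z + (σ:ℂ)) / Complex.Gamma z) / w := by
    rw [e1]; field_simp
  rw [e2, norm_div]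
  have hb := h z hz
  have hr1 : ‖w‖ ≤ ‖w + 1‖ := norm_le_norm_add_one w (by linarith)
  have hr2 : ‖w + 1‖ ≤ 2 * ‖w‖ := by
    calc ‖w + 1‖ ≤ ‖w‖ + ‖(1:ℂ)‖ := norm_add_le _ _
      _ = ‖w‖ + 1 := by rw [norm_one]
      _ ≤ 2 * ‖w‖ := by linarith
  have hrr : ‖w + 1‖ ^ σ ≤ 2 ^ |σ| * ‖w‖ ^ σ :=
    ratio_rpow σ 2 hwpos hr1 hr2 one_le_two
  calc ‖Complex.Gamma (z + (σ:ℂ)) / Complex.Gamma z‖ / ‖w‖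
      ≤ (K * ‖z + (σ:ℂ)‖ ^ σ) / ‖w‖ := by gcongr
    _ = K * ‖w + 1‖ ^ σ / ‖w‖ := by rw [e0]
    _ ≤ K * (2 ^ |σ| * ‖w‖ ^ σ) / ‖w‖ := by
        gcongr
    _ = K * 2 ^ |σ| * ‖w‖ ^ (σ - 1) := by
        rw [Real.rpow_sub hwpos, Real.rpow_one]; ring
lemma up_many (m : ℕ) (τ : ℝ) (hτ0 : 0 ≤ τ) (hτ1 : τ ≤ 1) :
    ∃ K : ℝ, 0 < K ∧ ∀ z : ℂ, (1:ℝ) ≤ z.re →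
      ‖Complex.Gamma (z + ((τ + m : ℝ):ℂ)) / Complex.Gamma z‖
        ≤ K * ‖z + ((τ + m : ℝ):ℂ)‖ ^ (τ + m) := by
  induction m with
  | zero =>
    refine ⟨4, by norm_num, fun z hz => ?_⟩
    simpa using core_bound τ hτ0 hτ1 z hz
  | succ m ih =>
    obtain ⟨K, hK, hb⟩ := ih
    refine ⟨K, hK, fun z hz => ?_⟩
    have e : (τ + ((m+1:ℕ):ℝ)) = (τ + (m:ℕ)) + 1 := by push_cast; ring
    rw [e]
    exact step_up (τ + m) 1 K le_rfl (by positivity) hK hb z hz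

lemma down_many (m : ℕ) (τ β : ℝ) (hτ0 : 0 ≤ τ) (hτ1 : τ ≤ 1) (hβ : 1 ≤ β)
    (hcond : 1 ≤ β + (τ - m)) :
    ∃ K : ℝ, 0 < K ∧ ∀ z : ℂ, β ≤ z.re →
      ‖Complex.Gamma (z + ((τ - m : ℝ):ℂ)) / Complex.Gamma z‖
        ≤ K * ‖z + ((τ - m : ℝ):ℂ)‖ ^ (τ - m) := by
  induction m with
  | zero =>
    refine ⟨4, by norm_num, fun z hz => ?_⟩
    simpa using core_bound τ hτ0 hτ1 z (le_trans hβ hz)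
  | succ m ih =>
    have hm : ((m:ℝ)) ≤ (m+1:ℕ) := by push_cast; linarith
    have hcond' : 1 ≤ β + (τ - m) := by
      have : ((m:ℝ)) + 1 = ((m+1:ℕ):ℝ) := by push_cast; ring
      nlinarith [hcond]
    obtain ⟨K, hK, hb⟩ := ih hcond'
    have e : (τ - ((m+1:ℕ):ℝ)) = (τ - (m:ℕ)) - 1 := by push_cast; ring
    obtain ⟨K', hK', hb'⟩ := step_down (τ - m) β K hK (by rw [← e]; exact
      (by push_cast at hcond ⊢; linarith : (1:ℝ) ≤ β + (τ - ((m+1:ℕ):ℝ)))) hb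
    refine ⟨K', hK', fun z hz => ?_⟩
    rw [e]
    exact hb' z hz

lemma shift_step (σ α K : ℝ) (hα : -σ < α) (hK : 0 < K)
    (h : ∀ z : ℂ, α + 1 ≤ z.re → ‖Complex.Gamma (z + σ) / Complex.Gamma z‖ ≤ K * ‖z + (σ:ℂ)‖ ^ σ) :
    ∃ K', 0 < K' ∧ ∀ z : ℂ, α ≤ z.re →
      ‖Complex.Gamma (z + σ) / Complex.Gamma z‖ ≤ K' * ‖z + (σ:ℂ)‖ ^ σ := by
  set δ : ℝ := α + σ with hδ
  have hδ0 : 0 < δ := by linarith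
  set C : ℝ := 1 + 1/δ with hC
  have hC1 : (1:ℝ) ≤ C := by
    rw [hC]
    have : 0 < 1/δ := by positivity
    linarith
  set D : ℝ := 1 + |σ|/δ with hD
  have hD1 : (1:ℝ) ≤ D := by
    rw [hD]
    have : 0 ≤ |σ|/δ := by positivity
    linarith
  refine ⟨K * (C ^ |σ| * D), by positivity, ?_⟩
  intro z hz
  have hzσre : δ ≤ (z + (σ:ℂ)).re := by
    simp only [Complex.add_re, Complex.ofReal_re]
    linarith
  have hzσne : z + (σ:ℂ) ≠ 0 := by
    intro h0; rw [h0] at hzσre; simp at hzσre; linarith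
  have hzσpos : 0 < ‖z + (σ:ℂ)‖ := norm_pos_iff.mpr hzσne
  have hzσδ : δ ≤ ‖z + (σ:ℂ)‖ := by
    calc δ ≤ (z + (σ:ℂ)).re := hzσre
      _ ≤ ‖z + (σ:ℂ)‖ := Complex.re_le_norm _
      _ = ‖z + (σ:ℂ)‖ := rfl
  by_cases hΓ : Complex.Gamma z = 0
  · rw [hΓ, div_zero, norm_zero]
    positivity
  · have hz0 : z ≠ 0 := by
      intro h0; rw [h0] at hΓ; exact hΓ Complex.Gamma_zero
    set w : ℂ := z + 1 with hwdef
    have hwre : α + 1 ≤ w.re := by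
      simp only [hwdef, Complex.add_re, Complex.one_re]; linarith
    have e1 : Complex.Gamma w = z * Complex.Gamma z := Complex.Gamma_add_one z hz0
    have e2 : Complex.Gamma (w + (σ:ℂ)) = (z + σ) * Complex.Gamma (z + σ) := by
      rw [show w + (σ:ℂ) = (z + σ) + 1 by rw [hwdef]; ring]
      exact Complex.Gamma_add_one _ hzσne
    have hΓw : Complex.Gamma w ≠ 0 := by
      rw [e1]; exact mul_ne_zero hz0 hΓ
    have hid : Complex.Gamma (z + σ) / Complex.Gamma z
        = (Complex.Gamma (w + (σ:ℂ)) / Complex.Gamma w) * ((z + σ) / z)⁻¹ := by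
      rw [e1, e2]
      field_simp
    rw [hid, norm_mul]
    have hb := h w hwre
    -- ratio bounds
    have hr1 : ‖z + (σ:ℂ)‖ ≤ ‖w + (σ:ℂ)‖ := by
      rw [show w + (σ:ℂ) = (z + (σ:ℂ)) + 1 by rw [hwdef]; ring]
      exact norm_le_norm_add_one _ (by linarith)
    have hr2 : ‖w + (σ:ℂ)‖ ≤ C * ‖z + (σ:ℂ)‖ := by
      rw [show w + (σ:ℂ) = (z + (σ:ℂ)) + 1 by rw [hwdef]; ring]
      calc ‖(z + (σ:ℂ)) + 1‖ ≤ ‖z + (σ:ℂ)‖ + 1 := by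
            calc ‖(z + (σ:ℂ)) + 1‖ ≤ ‖z + (σ:ℂ)‖ + ‖(1:ℂ)‖ := norm_add_le _ _
              _ = ‖z + (σ:ℂ)‖ + 1 := by rw [norm_one]
        _ ≤ C * ‖z + (σ:ℂ)‖ := by
            rw [hC]
            have h1 : 1 ≤ ‖z + (σ:ℂ)‖ / δ := (one_le_div hδ0).mpr hzσδ
            have : (1 + 1/δ) * ‖z + (σ:ℂ)‖ = ‖z + (σ:ℂ)‖ + ‖z + (σ:ℂ)‖/δ := by
              field_simp
            rw [this]
            nlinarith
    have hrr : ‖w + (σ:ℂ)‖ ^ σ ≤ C ^ |σ| * ‖z + (σ:ℂ)‖ ^ σ :=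
      ratio_rpow σ C hzσpos hr1 hr2 hC1
    -- z / (z+σ) bound
    have hzr : ‖((z + (σ:ℂ)) / z)⁻¹‖ ≤ D := by
      rw [norm_inv, norm_div]
      rw [inv_div]
      rw [div_le_iff₀ hzσpos]
      have : ‖z‖ ≤ ‖z + (σ:ℂ)‖ + |σ| := by
        calc ‖z‖ = ‖(z + (σ:ℂ)) + (-(σ:ℂ))‖ := by congr 1; ring
          _ ≤ ‖z + (σ:ℂ)‖ + ‖(-(σ:ℂ))‖ := norm_add_le _ _
          _ = ‖z + (σ:ℂ)‖ + |σ| := by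
              rw [norm_neg, Complex.norm_real, Real.norm_eq_abs]
      have h2 : |σ| ≤ (|σ|/δ) * ‖z + (σ:ℂ)‖ := by
        rw [div_mul_eq_mul_div, le_div_iff₀ hδ0]
        nlinarith [abs_nonneg σ]
      rw [hD]
      nlinarith
    calc ‖Complex.Gamma (w + (σ:ℂ)) / Complex.Gamma w‖ * ‖((z + (σ:ℂ)) / z)⁻¹‖
        ≤ (K * ‖w + (σ:ℂ)‖ ^ σ) * D := by
          apply mul_le_mul hb hzr (norm_nonneg _) (by positivity)
      _ ≤ (K * (C ^ |σ| * ‖z + (σ:ℂ)‖ ^ σ)) * D := by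
          have := mul_le_mul_of_nonneg_left hrr (le_of_lt hK)
          nlinarith [this, hD1]
      _ = K * (C ^ |σ| * D) * ‖z + (σ:ℂ)‖ ^ σ := by ring

lemma shift_many (n : ℕ) : ∀ (σ α : ℝ), -σ < α →
    (∃ K : ℝ, 0 < K ∧ ∀ z : ℂ, α + n ≤ z.re →
      ‖Complex.Gamma (z + σ) / Complex.Gamma z‖ ≤ K * ‖z + (σ:ℂ)‖ ^ σ) →
    ∃ K : ℝ, 0 < K ∧ ∀ z : ℂ, α ≤ z.re →
      ‖Complex.Gamma (z + σ) / Complex.Gamma z‖ ≤ K * ‖z + (σ:ℂ)‖ ^ σ := by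
  induction n with
  | zero =>
    intro σ α hα h
    simpa using h
  | succ n ih =>
    intro σ α hα h
    have h' : ∃ K : ℝ, 0 < K ∧ ∀ z : ℂ, (α + 1) + n ≤ z.re →
        ‖Complex.Gamma (z + σ) / Complex.Gamma z‖ ≤ K * ‖z + (σ:ℂ)‖ ^ σ := by
      obtain ⟨K, hK, hb⟩ := h
      exact ⟨K, hK, fun z hz => hb z (by push_cast at hz ⊢; linarith)⟩
    obtain ⟨K, hK, hb⟩ := ih σ (α + 1) (by linarith) h'
    exact shift_step σ α K hα hK hb

lemma main_high (σ : ℝ) : ∃ K : ℝ, 0 < K ∧ ∀ z : ℂ, max 1 (1 - σ) ≤ z.re →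
    ‖Complex.Gamma (z + σ) / Complex.Gamma z‖ ≤ K * ‖z + (σ:ℂ)‖ ^ σ := by
  rcases le_or_gt 0 σ with hσ | hσ
  · set m : ℕ := ⌊σ⌋₊ with hm
    set τ : ℝ := σ - m with hτ
    have hτ0 : 0 ≤ τ := by
      rw [hτ]; have := Nat.floor_le hσ; linarith
    have hτ1 : τ ≤ 1 := by
      rw [hτ]; have := Nat.lt_floor_add_one σ; linarith
    obtain ⟨K, hK, hb⟩ := up_many m τ hτ0 hτ1
    have e : τ + (m:ℝ) = σ := by rw [hτ]; ring
    rw [e] at hb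
    exact ⟨K, hK, fun z hz => hb z (le_trans (le_max_left _ _) hz)⟩
  · set m : ℕ := ⌈-σ⌉₊ with hm
    set τ : ℝ := σ + m with hτ
    have hτ0 : 0 ≤ τ := by
      rw [hτ]; have := Nat.le_ceil (-σ); linarith
    have hτ1 : τ ≤ 1 := by
      rw [hτ]
      have := Nat.ceil_lt_add_one (le_of_lt (neg_pos.mpr hσ))
      linarith
    set β : ℝ := max 1 (1 - σ) with hβ
    have hβ1 : 1 ≤ β := le_max_left _ _
    have hβσ : 1 - σ ≤ β := le_max_right _ _
    obtain ⟨K, hK, hb⟩ := down_many m τ β hτ0 hτ1 hβ1 (by rw [hτ]; push_cast; linarith)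
    have e : τ - (m:ℝ) = σ := by rw [hτ]; ring
    rw [e] at hb
    exact ⟨K, hK, hb⟩

/-- Uniform bound for the Gamma quotient: for any real `σ` and `α > -σ`, there is a
constant `K` such that `|Γ(z+σ)/Γ(z)| ≤ K * |z+σ|^σ` for all `z` with `Re z ≥ α`. -/
theorem gamma_quotient_bound (σ α : ℝ) (hα : α > -σ) :
    ∃ K : ℝ, 0 < K ∧ ∀ z : ℂ, α ≤ z.re →
      ‖Complex.Gamma (z + σ) / Complex.Gamma z‖ ≤ K * ‖z + (σ : ℂ)‖ ^ σ := by
  set β : ℝ := max 1 (1 - σ) with hβ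
  set n : ℕ := ⌈β - α⌉₊ with hn
  have hβn : β ≤ α + n := by
    have := Nat.le_ceil (β - α)
    rw [hn]; linarith
  obtain ⟨K, hK, hb⟩ := main_high σ
  apply shift_many n σ α hα
  exact ⟨K, hK, fun z hz => hb z (by rw [← hβ]; linarith)⟩
end

section
/- For any complex z with |z| > 2|σ| and Re(z) ≥ α > -σ, Stirling's asymptotic gives |Γ(z+σ)/Γ(z)| ≤ K(σ)·|(z+σ)^{z+σ-1/2}/z^{z-1/2}| ≤ K'(σ)·|z+σ|^σ for suitable constants K(σ), K'(σ) depending only on σ. -/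
open Complex Filter Finset Topology

namespace GammaQuotAux


lemma log_sub_self_le {w : ℂ} (hw : ‖w‖ ≤ 1/2) : ‖Complex.log (1 + w) - w‖ ≤ ‖w‖ ^ 2 := by
  have h0 : (0:ℝ) ≤ ‖w‖ := norm_nonneg w
  have h2 : (0:ℝ) < 1 - ‖w‖ := by linarith
  have h1 : (1 - ‖w‖)⁻¹ ≤ 2 := by
    rw [inv_le_comm₀ h2 (by norm_num)]
    have : (2:ℝ)⁻¹ = 1/2 := by norm_num
    rw [this]; linarith
  calc ‖Complex.log (1 + w) - w‖ ≤ ‖w‖ ^ 2 * (1 - ‖w‖)⁻¹ / 2 :=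
        Complex.norm_log_one_add_sub_self_le (lt_of_le_of_lt hw (by norm_num))
    _ ≤ ‖w‖ ^ 2 := by nlinarith [sq_nonneg ‖w‖, inv_nonneg.2 h2.le]

lemma sum_inv_sq_le {x : ℝ} (hx : 1 ≤ x) (n : ℕ) :
    ∑ j ∈ range n, ((x + j) ^ 2)⁻¹ ≤ 2 := by
  have hx0 : (0:ℝ) < x := by linarith
  have key : ∀ m : ℕ, ∑ j ∈ range (m+1), ((x + j) ^ 2)⁻¹ + (x + m)⁻¹ ≤ (x^2)⁻¹ + x⁻¹ := by
    intro m
    induction m with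
    | zero => simp
    | succ m ih =>
      rw [Finset.sum_range_succ]
      have hxm : (0:ℝ) < x + m := by positivity
      have hxm1 : (0:ℝ) < x + (m+1:ℕ) := by push_cast; linarith
      push_cast
      have e0 : (x + ↑m)⁻¹ - (x + ↑m + 1)⁻¹ = ((x + ↑m) * (x + ↑m + 1))⁻¹ := by
        rw [inv_sub_inv (by positivity) (by positivity)]
        ring_nf
      have e1 : ((x + (↑m + 1)) ^ 2)⁻¹ ≤ (x + ↑m)⁻¹ - (x + ↑m + 1)⁻¹ := by
        rw [e0]
        apply inv_anti₀ (by positivity)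
        nlinarith
      push_cast at ih
      have : (x + (↑m + 1) : ℝ) = x + ↑m + 1 := by ring
      rw [this] at e1 ⊢
      linarith
  cases n with
  | zero => simp
  | succ m =>
    have h := key m
    have h1 : (x^2)⁻¹ ≤ 1 := by
      rw [inv_le_one_iff₀]; right; nlinarith
    have h2 : x⁻¹ ≤ 1 := by rw [inv_le_one_iff₀]; right; linarith
    have h3 : (0:ℝ) ≤ (x + m)⁻¹ := by positivity
    linarith

lemma re_log_one_add_div {a c : ℂ} (ha : a ≠ 0) (hac : a + c ≠ 0) :
    (Complex.log (1 + c / a)).re = Real.log ‖a + c‖ - Real.log ‖a‖ := by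
  have h : (1 : ℂ) + c / a = (a + c) / a := by field_simp
  rw [h, Complex.log_re, norm_div, Real.log_div (by simpa using hac) (by simpa using ha)]

lemma Gamma_add_nat (z : ℂ) (h : ∀ k : ℕ, z + k ≠ 0) (n : ℕ) :
    Complex.Gamma (z + n) = Complex.Gamma z * ∏ k ∈ range n, (z + k) := by
  induction n with
  | zero => simp
  | succ n ih =>
    have h1 : z + ((n:ℕ)+1 : ℕ) = (z + n) + 1 := by push_cast; ring
    rw [h1, Complex.Gamma_add_one _ (h n), ih, Finset.prod_range_succ]; ring



lemma core (σ : ℝ) {z : ℂ} (hz : 2 + 2*|σ| ≤ z.re) :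
    ‖Complex.Gamma (z + σ) / Complex.Gamma z‖ ≤ Real.exp (3*|σ| + 2*σ^2) * ‖z‖ ^ σ := by
  have habs : (0:ℝ) ≤ |σ| := abs_nonneg σ
  have hx2 : (2:ℝ) ≤ z.re := by linarith
  have hxσ : 2*|σ| ≤ z.re := by linarith
  -- basic nonvanishing facts
  have hrej : ∀ j : ℕ, (z + j).re = z.re + j := by intro j; simp
  have hrepos : ∀ j : ℕ, (0:ℝ) < (z + j).re := by
    intro j; rw [hrej]; have : (0:ℝ) ≤ j := Nat.cast_nonneg j; linarith
  have hj0 : ∀ j : ℕ, (z + j) ≠ 0 := by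
    intro j h; have := hrepos j; rw [h] at this; simp at this
  have habsj : ∀ j : ℕ, z.re + j ≤ ‖z + j‖ := by
    intro j; rw [← hrej]; exact Complex.re_le_norm _
  have hGz : Complex.Gamma z ≠ 0 := Complex.Gamma_ne_zero_of_re_pos (by linarith)
  have hz0 : z ≠ 0 := by
    intro h; rw [h] at hx2; simp at hx2; linarith
  have hznorm : (0:ℝ) < ‖z‖ := norm_pos_iff.2 hz0
  -- nonvanishing of shifted terms
  have hσj0 : ∀ j : ℕ, (z + σ + j) ≠ 0 := by
    intro j h
    have : (z + σ + j).re = z.re + σ + j := by simp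
    rw [h] at this; simp at this
    have : (0:ℝ) ≤ j := Nat.cast_nonneg j
    have haσ : -|σ| ≤ σ := neg_abs_le σ
    linarith
  set r : ℕ → ℝ := fun j => (Complex.log (1 + (σ:ℂ)/(z+j))).re with hr
  set g : ℕ → ℝ := fun j => Real.log ‖z + j‖ with hg
  -- per-term estimate
  have K1 : ∀ j : ℕ, |r j - σ * (g (j+1) - g j)| ≤ (σ^2 + |σ|) * ((z.re + j) ^ 2)⁻¹ := by
    intro j
    have hpj : (0:ℝ) < z.re + j := by rw [← hrej]; exact hrepos j
    have habsj' := habsj j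
    have habspos : (0:ℝ) < ‖z + j‖ := lt_of_lt_of_le hpj habsj'
    have hinva : ‖(z+j)⁻¹‖ ≤ (z.re + j)⁻¹ := by
      rw [norm_inv]
      exact inv_anti₀ hpj (by simpa using habsj')
    have hinvhalf : (z.re + j : ℝ)⁻¹ ≤ 1/2 := by
      rw [inv_le_comm₀ hpj (by norm_num)]
      have h0j : (0:ℝ) ≤ j := Nat.cast_nonneg j
      have : ((1:ℝ)/2)⁻¹ = 2 := by norm_num
      rw [this]; linarith
    -- w := σ/(z+j), u := 1/(z+j)
    have hwnorm : ‖(σ:ℂ)/(z+j)‖ ≤ |σ| * (z.re + j)⁻¹ := by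
      rw [div_eq_mul_inv, norm_mul]
      have : ‖(σ:ℂ)‖ = |σ| := by simp
      rw [this]
      exact mul_le_mul_of_nonneg_left hinva habs
    have hwhalf : ‖(σ:ℂ)/(z+j)‖ ≤ 1/2 := by
      calc ‖(σ:ℂ)/(z+j)‖ ≤ |σ| * (z.re + j)⁻¹ := hwnorm
        _ ≤ 1/2 := by
          rcases eq_or_lt_of_le habs with h|h
          · rw [← h]; simp
          · have h0j : (0:ℝ) ≤ j := Nat.cast_nonneg j
            have h14 : (z.re + j)⁻¹ ≤ (2*|σ|)⁻¹ := by
              apply inv_anti₀ (by positivity); linarith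
            calc |σ| * (z.re + j)⁻¹ ≤ |σ| * (2*|σ|)⁻¹ :=
                  mul_le_mul_of_nonneg_left h14 habs
              _ = 1/2 := by field_simp
    have huhalf : ‖(1:ℂ)/(z+j)‖ ≤ 1/2 := by
      rw [one_div]; exact le_trans hinva (by linarith)
    -- e1
    have e1 : |r j - ((σ:ℂ)/(z+j)).re| ≤ σ^2 * ((z.re + j)^2)⁻¹ := by
      have h1 : r j - ((σ:ℂ)/(z+j)).re = (Complex.log (1 + (σ:ℂ)/(z+j)) - (σ:ℂ)/(z+j)).re := by
        simp [hr]
      rw [h1]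
      calc |(Complex.log (1 + (σ:ℂ)/(z+j)) - (σ:ℂ)/(z+j)).re|
          ≤ ‖Complex.log (1 + (σ:ℂ)/(z+j)) - (σ:ℂ)/(z+j)‖ := Complex.abs_re_le_norm _
        _ ≤ ‖(σ:ℂ)/(z+j)‖^2 := log_sub_self_le hwhalf
        _ ≤ (|σ| * (z.re + j)⁻¹)^2 := by
            apply pow_le_pow_left₀ (norm_nonneg _) hwnorm
        _ = σ^2 * ((z.re + j)^2)⁻¹ := by
            rw [mul_pow, _root_.sq_abs, ← inv_pow]
    -- e2
    have hgdiff : g (j+1) - g j = (Complex.log (1 + 1/(z+j))).re := by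
      have h2 : z + ((j:ℕ)+1:ℕ) = (z + j) + 1 := by push_cast; ring
      rw [re_log_one_add_div (hj0 j) (by rw [← h2]; exact hj0 (j+1))]
      simp only [hg]
      rw [h2]
    have e2 : |(g (j+1) - g j) - ((1:ℂ)/(z+j)).re| ≤ ((z.re + j)^2)⁻¹ := by
      rw [hgdiff]
      have h1 : (Complex.log (1 + 1/(z+j))).re - ((1:ℂ)/(z+j)).re
          = (Complex.log (1 + 1/(z+j)) - 1/(z+j)).re := by simp
      rw [h1]
      calc |(Complex.log (1 + 1/(z+j)) - 1/(z+j)).re|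
          ≤ ‖Complex.log (1 + 1/(z+j)) - 1/(z+j)‖ := Complex.abs_re_le_norm _
        _ ≤ ‖(1:ℂ)/(z+j)‖^2 := log_sub_self_le huhalf
        _ ≤ ((z.re + j)⁻¹)^2 := by
            apply pow_le_pow_left₀ (norm_nonneg _) (by rw [one_div]; exact hinva)
        _ = ((z.re + j)^2)⁻¹ := by rw [← inv_pow]
    -- Re(σ/(z+j)) = σ * Re(1/(z+j))
    have hre : ((σ:ℂ)/(z+j)).re = σ * ((1:ℂ)/(z+j)).re := by
      have : (σ:ℂ)/(z+j) = (σ:ℂ) * (1/(z+j)) := by ring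
      rw [this, Complex.re_ofReal_mul]
    have expand : r j - σ * (g (j+1) - g j)
        = (r j - ((σ:ℂ)/(z+j)).re) - σ * ((g (j+1) - g j) - ((1:ℂ)/(z+j)).re) := by
      rw [hre]; ring
    rw [expand]
    calc |(r j - ((σ:ℂ)/(z+j)).re) - σ * ((g (j+1) - g j) - ((1:ℂ)/(z+j)).re)|
        ≤ |r j - ((σ:ℂ)/(z+j)).re| + |σ| * |(g (j+1) - g j) - ((1:ℂ)/(z+j)).re| := by
          rw [← abs_mul σ]
          exact abs_sub _ _
      _ ≤ σ^2 * ((z.re + j)^2)⁻¹ + |σ| * ((z.re + j)^2)⁻¹ := by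
          apply add_le_add e1
          exact mul_le_mul_of_nonneg_left e2 habs
      _ = (σ^2 + |σ|) * ((z.re + j)^2)⁻¹ := by ring
  -- summed estimate
  have K2 : ∀ n : ℕ, |∑ j ∈ range n, r j - σ * (g n - g 0)| ≤ (σ^2 + |σ|) * 2 := by
    intro n
    have htel : ∑ j ∈ range n, (g (j+1) - g j) = g n - g 0 := Finset.sum_range_sub g n
    have hsum : ∑ j ∈ range n, r j - σ * (g n - g 0)
        = ∑ j ∈ range n, (r j - σ * (g (j+1) - g j)) := by
      rw [Finset.sum_sub_distrib, ← Finset.mul_sum, htel]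
    rw [hsum]
    calc |∑ j ∈ range n, (r j - σ * (g (j+1) - g j))|
        ≤ ∑ j ∈ range n, |r j - σ * (g (j+1) - g j)| := Finset.abs_sum_le_sum_abs _ _
      _ ≤ ∑ j ∈ range n, (σ^2 + |σ|) * ((z.re + j)^2)⁻¹ :=
          Finset.sum_le_sum (fun j _ => K1 j)
      _ = (σ^2 + |σ|) * ∑ j ∈ range n, ((z.re + j)^2)⁻¹ := by rw [Finset.mul_sum]
      _ ≤ (σ^2 + |σ|) * 2 := by
          apply mul_le_mul_of_nonneg_left (sum_inv_sq_le (by linarith) n)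
          positivity
  -- ratio formula
  have K3 : ∀ n : ℕ, (n:ℂ) ≠ 0 →
      Complex.GammaSeq (z + σ) n / Complex.GammaSeq z n
        = (n:ℂ) ^ (σ:ℂ) * ∏ j ∈ range (n+1), ((z + j) / (z + σ + j)) := by
    intro n hn
    have hP0 : ∏ j ∈ range (n+1), (z + (j:ℂ)) ≠ 0 := Finset.prod_ne_zero_iff.2 fun j _ => hj0 j
    have hP1 : ∏ j ∈ range (n+1), (z + σ + (j:ℂ)) ≠ 0 := Finset.prod_ne_zero_iff.2 fun j _ => hσj0 j
    have hfact : ((n.factorial : ℕ) : ℂ) ≠ 0 := by exact_mod_cast Nat.factorial_ne_zero n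
    have hcz : (n:ℂ) ^ z ≠ 0 := by
      intro h
      exact hn ((Complex.cpow_eq_zero_iff _ _).1 h).1
    rw [Complex.GammaSeq, Complex.GammaSeq, Complex.cpow_add _ _ hn, Finset.prod_div_distrib]
    field_simp
  -- norm of the ratio
  have K4 : ∀ n : ℕ, 1 ≤ n →
      ‖Complex.GammaSeq (z + σ) n / Complex.GammaSeq z n‖
        = Real.exp (σ * Real.log n - ∑ j ∈ range (n+1), r j) := by
    intro n hn
    have hn0 : (n:ℂ) ≠ 0 := by exact_mod_cast Nat.one_le_iff_ne_zero.1 hn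
    have hnpos : (0:ℝ) < (n:ℝ) := by exact_mod_cast hn
    rw [K3 n hn0, norm_mul]
    have h1 : ‖(n:ℂ) ^ (σ:ℂ)‖ = Real.exp (σ * Real.log n) := by
      have : ((n:ℂ)) = (((n:ℝ)):ℂ) := by push_cast; ring
      rw [this, Complex.norm_cpow_eq_rpow_re_of_pos hnpos]
      simp only [Complex.ofReal_re]
      rw [Real.rpow_def_of_pos hnpos, mul_comm]
    have h2 : ‖∏ j ∈ range (n+1), ((z + (j:ℂ)) / (z + σ + j))‖
        = Real.exp (-(∑ j ∈ range (n+1), r j)) := by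
      rw [norm_prod]
      have hterm : ∀ j ∈ range (n+1), ‖(z + (j:ℂ)) / (z + σ + j)‖ = Real.exp (-(r j)) := by
        intro j _
        have hfac : z + σ + (j:ℂ) = (z + j) * (1 + (σ:ℂ)/(z+j)) := by
          field_simp [hj0 j]; ring
        have h1w : (0:ℝ) < ‖1 + (σ:ℂ)/(z+j)‖ := by
          have hne : (1:ℂ) + (σ:ℂ)/(z+j) ≠ 0 := by
            intro h
            have := hfac; rw [h, mul_zero] at this
            exact hσj0 j this
          exact norm_pos_iff.2 hne
        rw [hfac, div_mul_cancel_left₀ (hj0 j), norm_inv, Real.exp_neg]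
        congr 1
        rw [hr]
        simp only [Complex.log_re]
        exact (Real.exp_log h1w).symm
      rw [Finset.prod_congr rfl hterm, ← Real.exp_sum]
      rw [← Finset.sum_neg_distrib]
    rw [h1, h2, ← Real.exp_add]
    ring_nf
  have hc : Real.exp (3*|σ| + 2*σ^2) * ‖z‖ ^ σ
      = Real.exp (σ * Real.log ‖z‖ + (3*|σ| + 2*σ^2)) := by
    rw [Real.rpow_def_of_pos hznorm, ← Real.exp_add]
    congr 1; ring
  have K5 : ∀ᶠ n : ℕ in atTop, ‖Complex.GammaSeq (z + σ) n / Complex.GammaSeq z n‖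
      ≤ Real.exp (3*|σ| + 2*σ^2) * ‖z‖ ^ σ := by
    filter_upwards [eventually_ge_atTop 1, eventually_ge_atTop ⌈‖z‖ + 1⌉₊] with n hn1 hn2
    rw [K4 n hn1, hc]
    apply Real.exp_le_exp.2
    have h2 := K2 (n+1)
    have hg0 : g 0 = Real.log ‖z‖ := by simp [hg]
    have hnz : ‖z‖ + 1 ≤ (n:ℝ) := le_trans (Nat.le_ceil _) (by exact_mod_cast hn2)
    have hnR : (1:ℝ) ≤ (n:ℝ) := by exact_mod_cast hn1
    have hznn : (0:ℝ) ≤ ‖z‖ := norm_nonneg z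
    have hb1 : Real.log n ≤ g (n+1) := by
      apply Real.log_le_log (by linarith)
      calc (n:ℝ) ≤ z.re + ((n+1:ℕ):ℝ) := by push_cast; linarith
        _ ≤ ‖z + ((n+1:ℕ):ℂ)‖ := habsj (n+1)
    have hb2 : g (n+1) ≤ Real.log n + 1 := by
      have habsle : ‖z + ((n+1:ℕ):ℂ)‖ ≤ 2 * n := by
        calc ‖z + ((n+1:ℕ):ℂ)‖
            ≤ ‖z‖ + ‖((n+1:ℕ):ℂ)‖ := norm_add_le _ _
          _ = ‖z‖ + ((n+1:ℕ):ℝ) := by rw [Complex.norm_natCast]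
          _ ≤ 2 * n := by push_cast; linarith
      have hpos : (0:ℝ) < ‖z + ((n+1:ℕ):ℂ)‖ :=
        lt_of_lt_of_le (hrepos (n+1)) (Complex.re_le_norm _)
      have hgle : g (n+1) ≤ Real.log (2 * n) := Real.log_le_log hpos habsle
      calc g (n+1) ≤ Real.log (2 * n) := hgle
        _ = Real.log 2 + Real.log n := Real.log_mul (by norm_num) (by positivity)
        _ ≤ Real.log n + 1 := by
            have := Real.log_le_sub_one_of_pos (by norm_num : (0:ℝ) < 2)
            linarith
    have habs1 : |Real.log n - g (n+1)| ≤ 1 := abs_le.2 ⟨by linarith, by linarith⟩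
    have hA : σ * Real.log n - σ * g (n+1) ≤ |σ| := by
      calc σ * Real.log n - σ * g (n+1) = σ * (Real.log n - g (n+1)) := by ring
        _ ≤ |σ * (Real.log n - g (n+1))| := le_abs_self _
        _ = |σ| * |Real.log n - g (n+1)| := abs_mul _ _
        _ ≤ |σ| * 1 := mul_le_mul_of_nonneg_left habs1 habs
        _ = |σ| := mul_one _
    have hexp : σ * (g (n+1) - g 0) = σ * g (n+1) - σ * g 0 := by ring
    have hL : σ * g (n+1) - σ * g 0 - (σ^2 + |σ|) * 2 ≤ ∑ j ∈ range (n+1), r j := by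
      have := (abs_le.1 h2).1
      linarith
    rw [hg0] at hL
    linarith
  have K6 : Tendsto (fun n => ‖Complex.GammaSeq (z + σ) n / Complex.GammaSeq z n‖) atTop
      (𝓝 ‖Complex.Gamma (z + σ) / Complex.Gamma z‖) :=
    (((Complex.GammaSeq_tendsto_Gamma (z + σ)).div (Complex.GammaSeq_tendsto_Gamma z) hGz).norm)
  exact le_of_tendsto K6 K5



/-- Principal-branch splitting: `log (z+σ) = log z + log (1+σ/z)` in our region. -/
lemma log_split (σ : ℝ) {z : ℂ} (hz : 2*|σ| < ‖z‖) (hre : 0 < (z + (σ:ℂ)).re) :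
    Complex.log (z + σ) = Complex.log z + Complex.log (1 + (σ:ℂ)/z) := by
  have hznorm : (0:ℝ) < ‖z‖ := lt_of_le_of_lt (by positivity) hz
  have hz0 : z ≠ 0 := norm_pos_iff.1 hznorm
  have hzσ : z + (σ:ℂ) ≠ 0 := by intro h; rw [h] at hre; simp at hre
  have hwnorm : ‖(σ:ℂ)/z‖ < 1/2 := by
    rw [norm_div, div_lt_iff₀ hznorm]
    have : ‖(σ:ℂ)‖ = |σ| := by simp
    rw [this]; linarith
  have h1w : (0:ℝ) < (1 + (σ:ℂ)/z).re := by
    have h1 : (1 + (σ:ℂ)/z).re = 1 + ((σ:ℂ)/z).re := by simp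
    have h2 : |((σ:ℂ)/z).re| ≤ ‖(σ:ℂ)/z‖ := Complex.abs_re_le_norm _
    rw [h1]
    have := abs_le.1 h2
    linarith
  have h1w0 : (1:ℂ) + (σ:ℂ)/z ≠ 0 := by intro h; rw [h] at h1w; simp at h1w
  have hmul : z + (σ:ℂ) = z * (1 + (σ:ℂ)/z) := by field_simp
  set h : ℂ := Complex.log (z + σ) - Complex.log z - Complex.log (1 + (σ:ℂ)/z) with hh
  have hexp : Complex.exp h = 1 := by
    rw [hh, Complex.exp_sub, Complex.exp_sub, Complex.exp_log hzσ, Complex.exp_log hz0,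
      Complex.exp_log h1w0, hmul]
    field_simp
  obtain ⟨k, hk⟩ := Complex.exp_eq_one_iff.1 hexp
  have him : h.im = k * (2 * Real.pi) := by
    rw [hk]
    simp [Complex.mul_im, Complex.mul_re]
  have hpi : (0:ℝ) < Real.pi := Real.pi_pos
  have harg1 : |Complex.arg (z + σ)| < Real.pi / 2 :=
    Complex.abs_arg_lt_pi_div_two_iff.2 (Or.inl hre)
  have harg2 : |Complex.arg (1 + (σ:ℂ)/z)| < Real.pi / 2 :=
    Complex.abs_arg_lt_pi_div_two_iff.2 (Or.inl h1w)
  have harg3 : |Complex.arg z| ≤ Real.pi := Complex.abs_arg_le_pi z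
  have himeq : h.im = Complex.arg (z + σ) - Complex.arg z - Complex.arg (1 + (σ:ℂ)/z) := by
    rw [hh]; simp [Complex.log_im]
  have hbound : |h.im| < 2 * Real.pi := by
    rw [himeq]
    have h1 := abs_lt.1 harg1
    have h2 := abs_lt.1 harg2
    have h3 := abs_le.1 harg3
    rw [abs_lt]; constructor <;> linarith
  have hk0 : k = 0 := by
    by_contra hk0
    have : (1:ℝ) ≤ |(k:ℝ)| := by
      rw [← Int.cast_abs]
      exact_mod_cast Int.one_le_abs (by omega)
    rw [him, abs_mul] at hbound
    have : |(k:ℝ)| * |2 * Real.pi| ≥ 1 * (2 * Real.pi) := by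
      rw [abs_of_pos (by linarith : (0:ℝ) < 2 * Real.pi)]
      apply mul_le_mul_of_nonneg_right this (by linarith)
    linarith
  have hzero : h = 0 := by rw [hk, hk0]; simp
  have h0 : Complex.log (z + σ) - Complex.log z - Complex.log (1 + (σ:ℂ)/z) = 0 := by
    rw [← hh]; exact hzero
  linear_combination h0
  

/-- The middle quantity equals `‖z+σ‖^σ` up to a bounded exponential factor. -/
lemma mid_form (σ : ℝ) {z : ℂ} (hz : 2*|σ| < ‖z‖) (hre : 0 < (z + (σ:ℂ)).re) :
    ∃ ρ : ℝ, |ρ| ≤ 3/2*|σ| + 1 ∧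
      ‖(z + σ) ^ (z + σ - 1/2) / z ^ (z - 1/2)‖
        = Real.exp (σ * Real.log ‖z + (σ:ℂ)‖ + ρ) := by
  have hznorm : (0:ℝ) < ‖z‖ := lt_of_le_of_lt (by positivity) hz
  have hz0 : z ≠ 0 := norm_pos_iff.1 hznorm
  have hzσ : z + (σ:ℂ) ≠ 0 := by intro h; rw [h] at hre; simp at hre
  have hwnorm : ‖(σ:ℂ)/z‖ ≤ 1/2 := by
    rw [norm_div, div_le_iff₀ hznorm]
    have : ‖(σ:ℂ)‖ = |σ| := by simp
    rw [this]; linarith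
  set Λ : ℂ := Complex.log (1 + (σ:ℂ)/z) with hΛ
  have hsplit := log_split σ hz hre
  refine ⟨((z - 1/2) * Λ).re, ?_, ?_⟩
  · calc |((z - 1/2) * Λ).re| ≤ ‖(z - 1/2) * Λ‖ := Complex.abs_re_le_norm _
      _ = ‖z - 1/2‖ * ‖Λ‖ := norm_mul _ _
      _ ≤ (‖z‖ + 1/2) * ((3/2) * (|σ| / ‖z‖)) := by
          apply mul_le_mul
          · calc ‖z - 1/2‖ ≤ ‖z‖ + ‖(1/2 : ℂ)‖ := norm_sub_le _ _
              _ = ‖z‖ + 1/2 := by norm_num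
          · have := Complex.norm_log_one_add_half_le_self hwnorm
            rw [norm_div] at this
            have hs : ‖(σ:ℂ)‖ = |σ| := by simp
            rw [hs] at this
            exact this
          · exact norm_nonneg _
          · positivity
      _ ≤ 3/2*|σ| + 1 := by
          have h1 : |σ| / ‖z‖ ≤ 1/2 := by
            rw [div_le_iff₀ hznorm]; linarith
          have h2 : (0:ℝ) ≤ |σ| / ‖z‖ := by positivity
          have ht : ‖z‖ * (|σ| / ‖z‖) = |σ| := by
            rw [mul_comm]; exact div_mul_cancel₀ _ (ne_of_gt hznorm)
          nlinarith [ht]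
  · rw [Complex.cpow_def_of_ne_zero hzσ, Complex.cpow_def_of_ne_zero hz0, ← Complex.exp_sub]
    rw [Complex.norm_exp]
    congr 1
    have key : Complex.log (z + σ) * (z + σ - 1/2) - Complex.log z * (z - 1/2)
        = (σ:ℂ) * Complex.log (z + σ) + (z - 1/2) * Λ := by
      rw [hΛ]
      have hsplit' : Complex.log (1 + (σ:ℂ)/z) = Complex.log (z + σ) - Complex.log z := by
        rw [hsplit]; ring
      rw [hsplit']
      ring
    rw [key]
    simp only [Complex.add_re, Complex.mul_re, Complex.ofReal_re, Complex.ofReal_im]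
    rw [Complex.log_re]
    simp

/-- comparison of `‖z+n₀‖^σ` with `‖z+σ‖^σ`. -/
lemma pow_compare (σ : ℝ) (n₀ : ℕ) : ∃ c₃ : ℝ, 0 < c₃ ∧ ∀ z : ℂ, 2*|σ| < ‖z‖ →
    -((n₀:ℝ)/2) ≤ z.re → ‖z + (n₀:ℂ)‖ ^ σ ≤ c₃ * ‖z + (σ:ℂ)‖ ^ σ := by
  rcases eq_or_ne σ 0 with hσ | hσ
  · exact ⟨1, one_pos, fun z _ _ => by rw [hσ]; simp⟩
  have habs : (0:ℝ) < |σ| := abs_pos.2 hσ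
  set M : ℝ := 2 + n₀ / |σ| with hM
  have hM1 : (1:ℝ) ≤ M := by
    rw [hM]
    have : (0:ℝ) ≤ n₀ / |σ| := by positivity
    linarith
  refine ⟨Real.exp (|σ| * (Real.log M + 1)), Real.exp_pos _, fun z hz hre => ?_⟩
  have hznorm : (0:ℝ) < ‖z‖ := lt_of_le_of_lt (by positivity) hz
  have hz0 : z ≠ 0 := norm_pos_iff.1 hznorm
  -- ‖z+σ‖ ≥ ‖z‖/2 > 0
  have hlow : ‖z‖/2 ≤ ‖z + (σ:ℂ)‖ := by
    have h1 : ‖z‖ - ‖(σ:ℂ)‖ ≤ ‖z + (σ:ℂ)‖ := by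
      calc ‖z‖ - ‖(σ:ℂ)‖ = ‖z + (σ:ℂ) - (σ:ℂ)‖ - ‖(σ:ℂ)‖ := by ring_nf
        _ ≤ ‖z + (σ:ℂ)‖ := by
            have := norm_sub_le (z + (σ:ℂ)) (σ:ℂ)
            linarith
    have hs : ‖(σ:ℂ)‖ = |σ| := by simp
    rw [hs] at h1; linarith
  have hσpos : (0:ℝ) < ‖z + (σ:ℂ)‖ := by linarith
  -- ‖z‖ ≤ ‖z + n₀‖
  have hmono : ‖z‖ ≤ ‖z + (n₀:ℂ)‖ := by
    have h1 : Complex.normSq (z + (n₀:ℂ)) = Complex.normSq z + 2 * n₀ * z.re + n₀^2 := by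
      simp [Complex.normSq_apply, Complex.add_re, Complex.add_im]
      ring
    have h2 : Complex.normSq z ≤ Complex.normSq (z + (n₀:ℂ)) := by
      rw [h1]
      have hn0 : (0:ℝ) ≤ (n₀:ℝ) := Nat.cast_nonneg _
      nlinarith
    rw [Complex.norm_def, Complex.norm_def]
    exact Real.sqrt_le_sqrt h2
  have hnpos : (0:ℝ) < ‖z + (n₀:ℂ)‖ := lt_of_lt_of_le hznorm hmono
  -- ‖z+n₀‖ ≤ M * ‖z+σ‖
  have hup : ‖z + (n₀:ℂ)‖ ≤ M * ‖z + (σ:ℂ)‖ := by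
    have h1 : ‖z + (n₀:ℂ)‖ ≤ ‖z‖ + n₀ := by
      calc ‖z + (n₀:ℂ)‖ ≤ ‖z‖ + ‖(n₀:ℂ)‖ := norm_add_le _ _
        _ = ‖z‖ + n₀ := by norm_num
    have h2 : (n₀:ℝ) ≤ (n₀ / |σ|) * (‖z‖/2) := by
      calc (n₀:ℝ) = (n₀/|σ|) * |σ| := by field_simp
        _ ≤ (n₀/|σ|) * (‖z‖/2) := mul_le_mul_of_nonneg_left (by linarith) (by positivity)
    calc ‖z + (n₀:ℂ)‖ ≤ ‖z‖ + n₀ := h1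
      _ ≤ ‖z‖ + (n₀/|σ|) * (‖z‖/2) := by linarith
      _ = (2 + n₀/|σ|) * (‖z‖/2) := by ring
      _ ≤ M * ‖z + (σ:ℂ)‖ := by
          rw [hM]
          apply mul_le_mul_of_nonneg_left hlow (by positivity)
  -- ‖z+σ‖ ≤ (3/2)‖z+n₀‖
  have hdown : ‖z + (σ:ℂ)‖ ≤ (3/2) * ‖z + (n₀:ℂ)‖ := by
    have h1 : ‖z + (σ:ℂ)‖ ≤ ‖z‖ + |σ| := by
      calc ‖z + (σ:ℂ)‖ ≤ ‖z‖ + ‖(σ:ℂ)‖ := norm_add_le _ _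
        _ = ‖z‖ + |σ| := by simp
    have : |σ| ≤ ‖z‖/2 := by linarith
    calc ‖z + (σ:ℂ)‖ ≤ (3/2) * ‖z‖ := by linarith
      _ ≤ (3/2) * ‖z + (n₀:ℂ)‖ := by linarith
  -- convert to exp/log
  rw [Real.rpow_def_of_pos hnpos, Real.rpow_def_of_pos hσpos, ← Real.exp_add]
  apply Real.exp_le_exp.2
  have hlogM : (0:ℝ) ≤ Real.log M := Real.log_nonneg hM1
  have hup' : Real.log ‖z + (n₀:ℂ)‖ ≤ Real.log M + Real.log ‖z + (σ:ℂ)‖ := by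
    calc Real.log ‖z + (n₀:ℂ)‖ ≤ Real.log (M * ‖z + (σ:ℂ)‖) := Real.log_le_log hnpos hup
      _ = Real.log M + Real.log ‖z + (σ:ℂ)‖ := Real.log_mul (by linarith) (by linarith)
  have hdown' : Real.log ‖z + (σ:ℂ)‖ ≤ Real.log ‖z + (n₀:ℂ)‖ + 1 := by
    calc Real.log ‖z + (σ:ℂ)‖ ≤ Real.log ((3/2) * ‖z + (n₀:ℂ)‖) := Real.log_le_log hσpos hdown
      _ = Real.log (3/2) + Real.log ‖z + (n₀:ℂ)‖ := Real.log_mul (by norm_num) (by linarith)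
      _ ≤ Real.log ‖z + (n₀:ℂ)‖ + 1 := by
          have := Real.log_le_sub_one_of_pos (by norm_num : (0:ℝ) < 3/2)
          linarith
  rcases le_or_gt 0 σ with hσ0 | hσ0
  · have : Real.log ‖z + (n₀:ℂ)‖ * σ ≤ (Real.log M + Real.log ‖z + (σ:ℂ)‖) * σ :=
      mul_le_mul_of_nonneg_right hup' hσ0
    have habsσ : |σ| = σ := abs_of_nonneg hσ0
    nlinarith [Real.log_nonneg hM1]
  · have habsσ : |σ| = -σ := abs_of_neg hσ0
    have hkey : Real.log ‖z + (n₀:ℂ)‖ * σ ≤ (Real.log ‖z + (σ:ℂ)‖ - 1) * σ :=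
      mul_le_mul_of_nonpos_right (by linarith) hσ0.le
    nlinarith [Real.log_nonneg hM1]

end GammaQuotAux

open GammaQuotAux Complex Finset in
/-- Stirling-type bound: for `|z| > 2|σ|` and `Re z ≥ α > -σ`, the Gamma quotient is
bounded by the corresponding quotient of principal-branch powers, which is in turn
bounded by `|z+σ|^σ`, with constants depending only on `σ`. -/
theorem gamma_quotient_stirling_bound (σ α : ℝ) (hα : α > -σ) :
    ∃ K K' : ℝ, 0 < K ∧ 0 < K' ∧ ∀ z : ℂ, 2 * |σ| < ‖z‖ → α ≤ z.re →
      ‖Complex.Gamma (z + σ) / Complex.Gamma z‖ ≤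
        K * ‖(z + σ) ^ (z + σ - 1/2) / z ^ (z - 1/2)‖ ∧
      K * ‖(z + σ) ^ (z + σ - 1/2) / z ^ (z - 1/2)‖ ≤ K' * ‖z + (σ : ℂ)‖ ^ σ := by
  have hσα : (0:ℝ) < α + σ := by linarith
  have habs : (0:ℝ) ≤ |σ| := abs_nonneg σ
  have habsα : -|α| ≤ α := neg_abs_le α
  set A : ℝ := 2 + 2*|σ| with hA
  set n₀ : ℕ := ⌈A + 2*|α| + 1⌉₊ with hn₀
  have hn₀ge : A + 2*|α| + 1 ≤ (n₀:ℝ) := Nat.le_ceil _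
  have habsα0 : (0:ℝ) ≤ |α| := abs_nonneg α
  obtain ⟨c₃, hc₃pos, hc₃⟩ := pow_compare σ n₀
  set c₁ : ℝ := 1 + |σ|/(α+σ) with hc₁def
  have hc₁1 : (1:ℝ) ≤ c₁ := by
    rw [hc₁def]
    have : (0:ℝ) ≤ |σ|/(α+σ) := by positivity
    linarith
  have hc₁pos : (0:ℝ) < c₁ := by linarith
  set B : ℝ := 3/2*|σ| + 1 with hB
  set C₂ : ℝ := Real.exp (3*|σ| + 2*σ^2) * c₁^n₀ * c₃ with hC₂
  have hC₂pos : (0:ℝ) < C₂ := by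
    rw [hC₂]; positivity
  refine ⟨C₂ * Real.exp B, C₂ * Real.exp B * Real.exp B, by positivity, by positivity,
    fun z hz2 hzre => ?_⟩
  have hre : (0:ℝ) < (z + (σ:ℂ)).re := by
    simp only [Complex.add_re, Complex.ofReal_re]
    linarith
  have hσpos : (0:ℝ) < ‖z + (σ:ℂ)‖ := by
    apply norm_pos_iff.2
    intro h; rw [h] at hre; simp at hre
  obtain ⟨ρ, hρ, hMid⟩ := mid_form σ hz2 hre
  set a : ℝ := σ * Real.log ‖z + (σ:ℂ)‖ with ha
  have hT : ‖z + (σ:ℂ)‖ ^ σ = Real.exp a := by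
    rw [Real.rpow_def_of_pos hσpos, mul_comm]
  have hρB := abs_le.1 hρ
  constructor
  · -- first inequality
    by_cases hG : Complex.Gamma z = 0
    · rw [hG, div_zero, norm_zero]
      positivity
    -- nonvanishing facts
    have hk0 : ∀ k : ℕ, z + (k:ℂ) ≠ 0 := by
      intro k h
      apply hG
      rw [Complex.Gamma_eq_zero_iff]
      exact ⟨k, eq_neg_of_add_eq_zero_left h⟩
    have hσk0 : ∀ k : ℕ, z + (σ:ℂ) + (k:ℂ) ≠ 0 := by
      intro k h
      have hk : (0:ℝ) ≤ (k:ℝ) := Nat.cast_nonneg k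
      have : (z + (σ:ℂ) + (k:ℂ)).re = z.re + σ + k := by simp
      rw [h] at this
      simp at this
      linarith
    set P₀ : ℂ := ∏ k ∈ range n₀, (z + (k:ℂ)) with hP₀def
    set P₁ : ℂ := ∏ k ∈ range n₀, (z + (σ:ℂ) + (k:ℂ)) with hP₁def
    have hP₀ : P₀ ≠ 0 := Finset.prod_ne_zero_iff.2 fun k _ => hk0 k
    have hP₁ : P₁ ≠ 0 := Finset.prod_ne_zero_iff.2 fun k _ => hσk0 k
    have hz're : 2 + 2*|σ| ≤ (z + (n₀:ℂ)).re := by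
      have : (z + (n₀:ℂ)).re = z.re + n₀ := by simp
      rw [this, ← hA]
      linarith
    have hGz' : Complex.Gamma (z + (n₀:ℂ)) ≠ 0 :=
      Complex.Gamma_ne_zero_of_re_pos (by linarith)
    have e0 : Complex.Gamma (z + (n₀:ℂ)) = Complex.Gamma z * P₀ := Gamma_add_nat z hk0 n₀
    have e1 : Complex.Gamma (z + (σ:ℂ) + (n₀:ℂ)) = Complex.Gamma (z + (σ:ℂ)) * P₁ :=
      Gamma_add_nat (z + (σ:ℂ)) hσk0 n₀
    have hidentity : Complex.Gamma (z + (σ:ℂ)) / Complex.Gamma z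
        = Complex.Gamma ((z + (n₀:ℂ)) + (σ:ℂ)) / Complex.Gamma (z + (n₀:ℂ)) * (P₀/P₁) := by
      have hcomm : (z + (n₀:ℂ)) + (σ:ℂ) = z + (σ:ℂ) + (n₀:ℂ) := by ring
      rw [hcomm, e1, e0]
      field_simp
    -- bound the product of norms
    have hprod : ‖P₀/P₁‖ ≤ c₁^n₀ := by
      have : P₀/P₁ = ∏ k ∈ range n₀, ((z + (k:ℂ)) / (z + (σ:ℂ) + (k:ℂ))) := by
        rw [Finset.prod_div_distrib]
      rw [this, norm_prod]
      calc ∏ k ∈ range n₀, ‖(z + (k:ℂ)) / (z + (σ:ℂ) + (k:ℂ))‖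
          ≤ ∏ _k ∈ range n₀, c₁ := by
            apply Finset.prod_le_prod (fun k _ => norm_nonneg _)
            intro k _
            have hk : (0:ℝ) ≤ (k:ℝ) := Nat.cast_nonneg k
            have hreσk : α + σ ≤ (z + (σ:ℂ) + (k:ℂ)).re := by
              have : (z + (σ:ℂ) + (k:ℂ)).re = z.re + σ + k := by simp
              rw [this]; linarith
            have hnσk : α + σ ≤ ‖z + (σ:ℂ) + (k:ℂ)‖ := by
              calc α + σ ≤ (z + (σ:ℂ) + (k:ℂ)).re := hreσk
                _ ≤ ‖z + (σ:ℂ) + (k:ℂ)‖ := Complex.re_le_norm _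
            have hnσkpos : (0:ℝ) < ‖z + (σ:ℂ) + (k:ℂ)‖ := lt_of_lt_of_le hσα hnσk
            have hup : ‖z + (k:ℂ)‖ ≤ ‖z + (σ:ℂ) + (k:ℂ)‖ + |σ| := by
              calc ‖z + (k:ℂ)‖ = ‖(z + (σ:ℂ) + (k:ℂ)) - (σ:ℂ)‖ := by ring_nf
                _ ≤ ‖z + (σ:ℂ) + (k:ℂ)‖ + ‖(σ:ℂ)‖ := norm_sub_le _ _
                _ = ‖z + (σ:ℂ) + (k:ℂ)‖ + |σ| := by simp
            rw [norm_div, div_le_iff₀ hnσkpos, hc₁def]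
            have hmul : (|σ|/(α+σ)) * (α+σ) = |σ| := div_mul_cancel₀ _ (ne_of_gt hσα)
            have hge : |σ| ≤ (|σ|/(α+σ)) * ‖z + (σ:ℂ) + (k:ℂ)‖ :=
              calc |σ| = (|σ|/(α+σ)) * (α+σ) := hmul.symm
                _ ≤ (|σ|/(α+σ)) * ‖z + (σ:ℂ) + (k:ℂ)‖ :=
                    mul_le_mul_of_nonneg_left hnσk (by positivity)
            nlinarith
        _ = c₁^n₀ := by rw [Finset.prod_const, Finset.card_range]
    have hcore := core σ hz're
    have hpowc : ‖z + (n₀:ℂ)‖ ^ σ ≤ c₃ * ‖z + (σ:ℂ)‖ ^ σ := by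
      apply hc₃ z hz2
      have hn2 : 2*|α| ≤ (n₀:ℝ) := by linarith
      linarith
    have hTpos : (0:ℝ) < ‖z + (σ:ℂ)‖ ^ σ := Real.rpow_pos_of_pos hσpos σ
    have step1 : ‖Complex.Gamma (z + (σ:ℂ)) / Complex.Gamma z‖ ≤ C₂ * ‖z + (σ:ℂ)‖ ^ σ := by
      rw [hidentity, norm_mul]
      calc ‖Complex.Gamma ((z + (n₀:ℂ)) + (σ:ℂ)) / Complex.Gamma (z + (n₀:ℂ))‖ * ‖P₀/P₁‖
          ≤ (Real.exp (3*|σ| + 2*σ^2) * ‖z + (n₀:ℂ)‖ ^ σ) * c₁^n₀ := by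
            apply mul_le_mul hcore hprod (norm_nonneg _)
            positivity
        _ ≤ (Real.exp (3*|σ| + 2*σ^2) * (c₃ * ‖z + (σ:ℂ)‖ ^ σ)) * c₁^n₀ := by
            apply mul_le_mul_of_nonneg_right _ (by positivity)
            apply mul_le_mul_of_nonneg_left hpowc (Real.exp_pos _).le
        _ = C₂ * ‖z + (σ:ℂ)‖ ^ σ := by rw [hC₂]; ring
    calc ‖Complex.Gamma (z + (σ:ℂ)) / Complex.Gamma z‖
        ≤ C₂ * ‖z + (σ:ℂ)‖ ^ σ := step1
      _ = C₂ * Real.exp a := by rw [hT]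
      _ ≤ C₂ * (Real.exp B * Real.exp (a + ρ)) := by
          apply mul_le_mul_of_nonneg_left _ hC₂pos.le
          rw [← Real.exp_add]
          apply Real.exp_le_exp.2
          have hneg : -B ≤ ρ := by rw [hB]; exact hρB.1
          linarith
      _ = C₂ * Real.exp B * ‖(z + σ) ^ (z + σ - 1/2) / z ^ (z - 1/2)‖ := by
          rw [hMid]; ring
  · -- second inequality
    rw [hMid, hT]
    calc C₂ * Real.exp B * Real.exp (a + ρ)
        = C₂ * Real.exp B * (Real.exp a * Real.exp ρ) := by rw [← Real.exp_add]
      _ ≤ C₂ * Real.exp B * (Real.exp a * Real.exp B) := by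
          apply mul_le_mul_of_nonneg_left _ (by positivity)
          apply mul_le_mul_of_nonneg_left _ (Real.exp_pos _).le
          exact Real.exp_le_exp.2 hρB.2
      _ = C₂ * Real.exp B * Real.exp B * Real.exp a := by ring
end
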